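/- arXiv:1605.00317 — 7 statements merged into one kernel-verified Lean document; each statement's English description precedes it below -/
import Mathlib

section
/- For all real parameters ε ∈ [0,1] and α ∈ [0,1], the function x ↦ f(x, ε, α) is monotone nondecreasing on the interval [0,1]. -/
/-- Density evolution map of the peeling decoder with missing connections for
the (dv,dc)-regular LDPC ensemble over the BEC. -/
noncomputable def peelDE (dv dc : ℕ) (x ε α : ℝ) : ℝ :=
  ε * (α + (1 - α) * (1 - ((1 - x) * (1 - α)) ^ (dc - 1))) ^ (dv - 1)

/-- The peeling-decoder density evolution map is monotone nondecreasing in `x`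
on `[0,1]`, for every `ε, α ∈ [0,1]`. -/
theorem peelDE_monotoneOn_x (dv dc : ℕ) (hdv : 2 ≤ dv) (hdc : 2 ≤ dc)
    (ε α : ℝ) (hε : ε ∈ Set.Icc (0 : ℝ) 1) (hα : α ∈ Set.Icc (0 : ℝ) 1) :
    MonotoneOn (fun x => peelDE dv dc x ε α) (Set.Icc (0 : ℝ) 1) := by
  obtain ⟨hε0, hε1⟩ := hε
  obtain ⟨hα0, hα1⟩ := hα
  intro x hx y hy hxy
  obtain ⟨hx0, hx1⟩ := hx
  obtain ⟨hy0, hy1⟩ := hy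
  simp only [peelDE]
  have hy_nn : (0:ℝ) ≤ (1 - y) * (1 - α) := mul_nonneg (by linarith) (by linarith)
  have hle : (1 - y) * (1 - α) ≤ (1 - x) * (1 - α) :=
    mul_le_mul_of_nonneg_right (by linarith) (by linarith)
  have hpow : ((1 - y) * (1 - α)) ^ (dc - 1) ≤ ((1 - x) * (1 - α)) ^ (dc - 1) :=
    pow_le_pow_left₀ hy_nn hle _
  have hbx : ((1 - x) * (1 - α)) ^ (dc - 1) ≤ 1 :=
    pow_le_one₀ (mul_nonneg (by linarith) (by linarith))
      (mul_le_one₀ (by linarith) (by linarith) (by linarith))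
  have hgx_nn : (0:ℝ) ≤ α + (1 - α) * (1 - ((1 - x) * (1 - α)) ^ (dc - 1)) := by
    have : (0:ℝ) ≤ (1 - α) * (1 - ((1 - x) * (1 - α)) ^ (dc - 1)) :=
      mul_nonneg (by linarith) (by linarith)
    linarith
  have hg : α + (1 - α) * (1 - ((1 - x) * (1 - α)) ^ (dc - 1)) ≤
      α + (1 - α) * (1 - ((1 - y) * (1 - α)) ^ (dc - 1)) := by
    have := mul_le_mul_of_nonneg_left (by linarith :
      1 - ((1 - x) * (1 - α)) ^ (dc - 1) ≤ 1 - ((1 - y) * (1 - α)) ^ (dc - 1))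
      (by linarith : (0:ℝ) ≤ 1 - α)
    linarith
  exact mul_le_mul_of_nonneg_left (pow_le_pow_left₀ hgx_nn hg _) hε0
end

section
/- Let ε ∈ [0,1] and α ∈ [0,1], and define the density evolution sequence by x_0 = ε and x_{ℓ+1} = f(x_ℓ, ε, α). Then the sequence (x_ℓ) is monotone nonincreasing, it converges to a limit L ∈ [0, ε], L is a fixed point of x ↦ f(x, ε, α), and L is the largest fixed point in [0, ε]: every y ∈ [0, ε] with y = f(y, ε, α) satisfies y ≤ L. -/
private lemma aux_base_bounds (dc : ℕ) (x α : ℝ) (hx0 : 0 ≤ x) (hx1 : x ≤ 1)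
    (hα0 : 0 ≤ α) (hα1 : α ≤ 1) :
    0 ≤ α + (1 - α) * (1 - ((1 - x) * (1 - α)) ^ (dc - 1)) ∧
    α + (1 - α) * (1 - ((1 - x) * (1 - α)) ^ (dc - 1)) ≤ 1 := by
  have ht0 : 0 ≤ (1 - x) * (1 - α) := by nlinarith
  have ht1 : (1 - x) * (1 - α) ≤ 1 := by nlinarith
  have hp0 : 0 ≤ ((1 - x) * (1 - α)) ^ (dc - 1) := pow_nonneg ht0 _
  have hp1 : ((1 - x) * (1 - α)) ^ (dc - 1) ≤ 1 := pow_le_one₀ ht0 ht1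
  constructor <;> nlinarith

private lemma peelDE_bounds (dv dc : ℕ) (x ε α : ℝ) (hx0 : 0 ≤ x) (hx1 : x ≤ 1)
    (hε0 : 0 ≤ ε) (hα0 : 0 ≤ α) (hα1 : α ≤ 1) :
    0 ≤ peelDE dv dc x ε α ∧ peelDE dv dc x ε α ≤ ε := by
  obtain ⟨hb0, hb1⟩ := aux_base_bounds dc x α hx0 hx1 hα0 hα1
  unfold peelDE
  constructor
  · exact mul_nonneg hε0 (pow_nonneg hb0 _)
  · calc ε * (α + (1 - α) * (1 - ((1 - x) * (1 - α)) ^ (dc - 1))) ^ (dv - 1)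
        ≤ ε * 1 := by
          apply mul_le_mul_of_nonneg_left (pow_le_one₀ hb0 hb1) hε0
    _ = ε := mul_one ε

private lemma peelDE_mono (dv dc : ℕ) (ε α : ℝ) (hε0 : 0 ≤ ε)
    (hα0 : 0 ≤ α) (hα1 : α ≤ 1) {x y : ℝ} (hx0 : 0 ≤ x) (hxy : x ≤ y) (hy1 : y ≤ 1) :
    peelDE dv dc x ε α ≤ peelDE dv dc y ε α := by
  unfold peelDE
  apply mul_le_mul_of_nonneg_left _ hε0
  apply pow_le_pow_left₀ (aux_base_bounds dc x α hx0 (hxy.trans hy1) hα0 hα1).1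
  have ht0 : 0 ≤ (1 - y) * (1 - α) := by nlinarith
  have hle : (1 - y) * (1 - α) ≤ (1 - x) * (1 - α) := by nlinarith
  have hpow := pow_le_pow_left₀ ht0 hle (dc - 1)
  nlinarith

private lemma peelDE_continuous (dv dc : ℕ) (ε α : ℝ) :
    Continuous (fun x : ℝ => peelDE dv dc x ε α) := by
  unfold peelDE; fun_prop

/-- The density evolution sequence `x₀ = ε`, `x_{ℓ+1} = f(x_ℓ, ε, α)` of the
peeling decoder with missing connections is monotone nonincreasing and
converges to the largest fixed point of `x ↦ f(x,ε,α)` in `[0, ε]`. -/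
theorem peelDE_sequence_converges_to_largest_fixedPoint
    (dv dc : ℕ) (hdv : 2 ≤ dv) (hdc : 2 ≤ dc)
    (ε α : ℝ) (hε : ε ∈ Set.Icc (0 : ℝ) 1) (hα : α ∈ Set.Icc (0 : ℝ) 1)
    (xs : ℕ → ℝ) (hxs0 : xs 0 = ε)
    (hxs : ∀ ℓ : ℕ, xs (ℓ + 1) = peelDE dv dc (xs ℓ) ε α) :
    Antitone xs ∧
    ∃ L : ℝ, L ∈ Set.Icc (0 : ℝ) ε ∧
      Filter.Tendsto xs Filter.atTop (nhds L) ∧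
      L = peelDE dv dc L ε α ∧
      ∀ y ∈ Set.Icc (0 : ℝ) ε, y = peelDE dv dc y ε α → y ≤ L := by
  obtain ⟨hε0, hε1⟩ := hε
  obtain ⟨hα0, hα1⟩ := hα
  -- membership
  have hmem : ∀ ℓ, xs ℓ ∈ Set.Icc (0 : ℝ) ε := by
    intro ℓ
    induction ℓ with
    | zero => rw [hxs0]; exact ⟨hε0, le_refl ε⟩
    | succ n ih =>
      rw [hxs n]
      exact Set.mem_Icc.mpr
        (peelDE_bounds dv dc (xs n) ε α ih.1 (ih.2.trans hε1) hε0 hα0 hα1)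
  -- antitone step
  have hstep : ∀ ℓ, xs (ℓ + 1) ≤ xs ℓ := by
    intro ℓ
    induction ℓ with
    | zero =>
      rw [hxs 0, hxs0]
      exact (peelDE_bounds dv dc ε ε α hε0 hε1 hε0 hα0 hα1).2
    | succ n ih =>
      rw [hxs (n + 1)]
      calc peelDE dv dc (xs (n + 1)) ε α
          ≤ peelDE dv dc (xs n) ε α :=
            peelDE_mono dv dc ε α hε0 hα0 hα1 (hmem (n+1)).1 ih
              ((hmem n).2.trans hε1)
        _ = xs (n + 1) := (hxs n).symm
  have hanti : Antitone xs := antitone_nat_of_succ_le hstep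
  refine ⟨hanti, ⟨⨅ n, xs n, ?_, ?_, ?_, ?_⟩⟩
  all_goals
    have hbdd : BddBelow (Set.range xs) := ⟨0, by rintro _ ⟨n, rfl⟩; exact (hmem n).1⟩
  · constructor
    · exact le_ciInf fun n => (hmem n).1
    · exact (ciInf_le hbdd 0).trans (le_of_eq hxs0)
  · exact tendsto_atTop_ciInf hanti hbdd
  · have hT : Filter.Tendsto xs Filter.atTop (nhds (⨅ n, xs n)) :=
      tendsto_atTop_ciInf hanti hbdd
    have h1 : Filter.Tendsto (fun n => xs (n + 1)) Filter.atTop (nhds (⨅ n, xs n)) :=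
      hT.comp (Filter.tendsto_add_atTop_nat 1)
    have h2 : Filter.Tendsto (fun n => peelDE dv dc (xs n) ε α) Filter.atTop
        (nhds (peelDE dv dc (⨅ n, xs n) ε α)) :=
      ((peelDE_continuous dv dc ε α).tendsto _).comp hT
    have h3 : (fun n => xs (n + 1)) = fun n => peelDE dv dc (xs n) ε α :=
      funext hxs
    rw [h3] at h1
    exact tendsto_nhds_unique h1 h2
  · intro y hy hfix
    have hle : ∀ ℓ, y ≤ xs ℓ := by
      intro ℓ
      induction ℓ with
      | zero => rw [hxs0]; exact hy.2
      | succ n ih =>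
        rw [hxs n, hfix]
        exact peelDE_mono dv dc ε α hε0 hα0 hα1 hy.1 ih ((hmem n).2.trans hε1)
    exact le_ciInf hle
end

section
/- Let ε ∈ (0, 1/2) and α ∈ (0, 1). Then f(0, ε, α) = ε · (α + (1-α)(1 - (1-α)^(dc-1)))^(dv-1) > 0, and every fixed point x ∈ [0,1] of x ↦ f(x, ε, α) satisfies x ≥ f(0, ε, α). In particular x = 0 is not a fixed point, there is no fixed point in the open interval (0, f(0, ε, α)), and the asymptotic decoding error probability of the peeling decoder with missing connections is strictly positive. -/
/-- For `ε ∈ (0,1/2)` and `α ∈ (0,1)`, the peeling-decoder DE map satisfies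
`f(0,ε,α) = ε (α + (1-α)(1-(1-α)^(dc-1)))^(dv-1) > 0`, every fixed point in
`[0,1]` is at least `f(0,ε,α)`, `0` is not a fixed point, and there is no
fixed point in the open interval `(0, f(0,ε,α))`: the asymptotic decoding
error probability with missing connections is strictly positive. -/
theorem peelDE_error_strictly_positive (dv dc : ℕ) (hdv : 2 ≤ dv) (hdc : 2 ≤ dc)
    (ε α : ℝ) (hε : ε ∈ Set.Ioo (0 : ℝ) (1 / 2)) (hα : α ∈ Set.Ioo (0 : ℝ) 1) :
    peelDE dv dc 0 ε α = ε * (α + (1 - α) * (1 - (1 - α) ^ (dc - 1))) ^ (dv - 1) ∧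
    0 < peelDE dv dc 0 ε α ∧
    (∀ x ∈ Set.Icc (0 : ℝ) 1, x = peelDE dv dc x ε α → peelDE dv dc 0 ε α ≤ x) ∧
    ¬ ((0 : ℝ) = peelDE dv dc 0 ε α) ∧
    (∀ x ∈ Set.Ioo (0 : ℝ) (peelDE dv dc 0 ε α), x ≠ peelDE dv dc x ε α) := by
  obtain ⟨hε0, hε1⟩ := hε
  obtain ⟨hα0, hα1⟩ := hα
  have h1α : (0:ℝ) < 1 - α := by linarith
  have h1α1 : (1:ℝ) - α ≤ 1 := by linarith
  -- positivity of the base at 0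
  have hbase0 : 0 < α + (1 - α) * (1 - (1 - α) ^ (dc - 1)) := by
    have hpow : (1 - α) ^ (dc - 1) ≤ 1 := pow_le_one₀ h1α.le h1α1
    nlinarith [mul_nonneg h1α.le (by linarith : (0:ℝ) ≤ 1 - (1 - α) ^ (dc - 1))]
  have heq : peelDE dv dc 0 ε α
      = ε * (α + (1 - α) * (1 - (1 - α) ^ (dc - 1))) ^ (dv - 1) := by
    simp [peelDE]
  have hpos : 0 < peelDE dv dc 0 ε α := by
    rw [heq]
    exact mul_pos hε0 (pow_pos hbase0 _)
  -- monotonicity: for x ∈ [0,1], f(0) ≤ f(x)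
  have hmono : ∀ x ∈ Set.Icc (0:ℝ) 1, peelDE dv dc 0 ε α ≤ peelDE dv dc x ε α := by
    rintro x ⟨hx0, hx1⟩
    have hxb : (0:ℝ) ≤ (1 - x) * (1 - α) := mul_nonneg (by linarith) h1α.le
    have hxle : (1 - x) * (1 - α) ≤ 1 - α := by nlinarith
    have hpowle : ((1 - x) * (1 - α)) ^ (dc - 1) ≤ (1 - α) ^ (dc - 1) :=
      pow_le_pow_left₀ hxb hxle _
    have hbasele : α + (1 - α) * (1 - (1 - α) ^ (dc - 1))
        ≤ α + (1 - α) * (1 - ((1 - x) * (1 - α)) ^ (dc - 1)) := by nlinarith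
    rw [heq]
    unfold peelDE
    have := pow_le_pow_left₀ hbase0.le hbasele (dv - 1)
    exact mul_le_mul_of_nonneg_left this hε0.le
  refine ⟨heq, hpos, ?_, ?_, ?_⟩
  · intro x hx hfix
    calc peelDE dv dc 0 ε α ≤ peelDE dv dc x ε α := hmono x hx
      _ = x := hfix.symm
  · intro h
    exact absurd h.symm (ne_of_gt hpos)
  · rintro x ⟨hx0, hx1⟩ hfix
    have hxle1 : x ≤ 1 := le_of_lt (lt_of_lt_of_le hx1 (by
      have hb1 : α + (1 - α) * (1 - (1 - α) ^ (dc - 1)) ≤ 1 := by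
        have hpnn : 0 ≤ (1 - α) ^ (dc - 1) := pow_nonneg h1α.le _
        nlinarith
      have hp1 : (α + (1 - α) * (1 - (1 - α) ^ (dc - 1))) ^ (dv - 1) ≤ 1 := pow_le_one₀ hbase0.le hb1
      rw [heq]
      nlinarith))
    have := hmono x ⟨hx0.le, hxle1⟩
    rw [← hfix] at this
    linarith
end

section
/- Let ε ∈ (0, 1/2) and α ∈ (0, 1). Then the quantity δ₀ = ε · λ(1 - (1-α)·ρ(1-α)) is strictly positive, and every fixed point x ∈ [0,1] of x ↦ f(x, ε, α) satisfies x ≥ δ₀. In particular, the asymptotic symbol error probability of the peeling decoder with missing connections for the irregular ensemble cannot be driven to zero. -/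
/-- Variable-node degree distribution polynomial `λ(y) = Σ_{d=2}^{Dv} λ_d y^(d-1)`. -/
noncomputable def degPoly (D : ℕ) (c : ℕ → ℝ) (y : ℝ) : ℝ :=
  ∑ d ∈ Finset.Icc 2 D, c d * y ^ (d - 1)

/-- Density evolution map of the peeling decoder with missing connections for the
irregular LDPC ensemble with degree distributions `λ` and `ρ` over the BEC. -/
noncomputable def peelDEirr (Dv Dc : ℕ) (lam rho : ℕ → ℝ) (x ε α : ℝ) : ℝ :=
  ε * degPoly Dv lam (α + (1 - α) * (1 - degPoly Dc rho ((1 - x) * (1 - α))))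

/-!
Since `ρ` is increasing on `[0, ∞)` and `(1 - x)(1 - α) ≤ 1 - α`, the argument
`1 - (1 - α) ρ((1 - x)(1 - α))` of `λ` in `f(x, ε, α)` is at least `1 - (1 - α) ρ(1 - α)`,
whatever `x ∈ [0, 1]` is; monotonicity of `λ` then gives `f(x, ε, α) ≥ δ₀` for every such `x`,
in particular at a fixed point. Positivity of `δ₀` comes from `1 - (1 - α) ρ(1 - α) ≥ α > 0`,
as `ρ(1 - α) ≤ ρ(1) = 1`.
-/

open Finset

section DegPoly

variable {D : ℕ} {c : ℕ → ℝ}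

lemma degPoly_one (D : ℕ) (c : ℕ → ℝ) : degPoly D c 1 = ∑ d ∈ Icc 2 D, c d := by
  simp [degPoly]

lemma degPoly_monotoneOn (hc : ∀ d, 0 ≤ c d) : MonotoneOn (degPoly D c) (Set.Ici 0) :=
  fun _ hy _ _ hyz => sum_le_sum fun d _ =>
    mul_le_mul_of_nonneg_left (pow_le_pow_left₀ hy hyz _) (hc d)

lemma degPoly_pos (hc : ∀ d, 0 ≤ c d) (hc1 : 0 < ∑ d ∈ Icc 2 D, c d) {y : ℝ} (hy : 0 < y) :
    0 < degPoly D c y := by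
  obtain ⟨d, hd, hcd⟩ :=
    exists_lt_of_sum_lt (s := Icc 2 D) (f := 0) (g := c) (by simpa using hc1)
  exact sum_pos' (fun d _ => mul_nonneg (hc d) (pow_nonneg hy.le _))
    ⟨d, hd, mul_pos hcd (pow_pos hy _)⟩

lemma degPoly_le_one (hc : ∀ d, 0 ≤ c d) (hc1 : ∑ d ∈ Icc 2 D, c d = 1) {y : ℝ}
    (hy : y ∈ Set.Icc 0 1) : degPoly D c y ≤ 1 :=
  hc1 ▸ degPoly_one D c ▸
    degPoly_monotoneOn hc hy.1 (Set.mem_Ici.2 zero_le_one) hy.2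

lemma le_one_sub_mul_degPoly (hc : ∀ d, 0 ≤ c d) (hc1 : ∑ d ∈ Icc 2 D, c d = 1) {α : ℝ}
    (hα : α ∈ Set.Icc 0 1) : α ≤ 1 - (1 - α) * degPoly D c (1 - α) := by
  have hρ := degPoly_le_one hc hc1 (y := 1 - α) ⟨by linarith [hα.2], by linarith [hα.1]⟩
  nlinarith [hα.2]

end DegPoly

lemma mul_degPoly_le_peelDEirr {Dv Dc : ℕ} {lam rho : ℕ → ℝ} (hlam : ∀ d, 0 ≤ lam d)
    (hrho : ∀ d, 0 ≤ rho d) (hrho1 : ∑ d ∈ Icc 2 Dc, rho d = 1) {ε α x : ℝ} (hε : 0 ≤ ε)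
    (hα : α ∈ Set.Icc 0 1) (hx : x ∈ Set.Icc 0 1) :
    ε * degPoly Dv lam (1 - (1 - α) * degPoly Dc rho (1 - α)) ≤ peelDEirr Dv Dc lam rho x ε α := by
  have h1α : 0 ≤ 1 - α := by linarith [hα.2]
  have hρ : degPoly Dc rho ((1 - x) * (1 - α)) ≤ degPoly Dc rho (1 - α) :=
    degPoly_monotoneOn hrho (Set.mem_Ici.2 (mul_nonneg (by linarith [hx.2]) h1α))
      (Set.mem_Ici.2 h1α) (mul_le_of_le_one_left h1α (by linarith [hx.1]))
  have ht : 0 ≤ 1 - (1 - α) * degPoly Dc rho (1 - α) :=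
    hα.1.trans (le_one_sub_mul_degPoly hrho hrho1 hα)
  have harg : 1 - (1 - α) * degPoly Dc rho (1 - α) ≤
      α + (1 - α) * (1 - degPoly Dc rho ((1 - x) * (1 - α))) := by
    nlinarith
  exact mul_le_mul_of_nonneg_left
    (degPoly_monotoneOn hlam (Set.mem_Ici.2 ht) (Set.mem_Ici.2 (ht.trans harg)) harg) hε

theorem peelDEirr_fixedPoint_lower_bound_general
    (Dv Dc : ℕ) (lam rho : ℕ → ℝ)
    (hlam : ∀ d, 0 ≤ lam d) (hrho : ∀ d, 0 ≤ rho d)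
    (hlam1 : ∑ d ∈ Finset.Icc 2 Dv, lam d = 1)
    (hrho1 : ∑ d ∈ Finset.Icc 2 Dc, rho d = 1)
    (ε α : ℝ) (hε : ε ∈ Set.Ioo (0 : ℝ) (1 / 2)) (hα : α ∈ Set.Ioo (0 : ℝ) 1) :
    0 < ε * degPoly Dv lam (1 - (1 - α) * degPoly Dc rho (1 - α)) ∧
    ∀ x ∈ Set.Icc (0 : ℝ) 1, x = peelDEirr Dv Dc lam rho x ε α →
      ε * degPoly Dv lam (1 - (1 - α) * degPoly Dc rho (1 - α)) ≤ x := by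
  have hα' : α ∈ Set.Icc 0 1 := Set.Ioo_subset_Icc_self hα
  refine ⟨mul_pos hε.1 (degPoly_pos hlam (hlam1 ▸ one_pos) ?_), fun x hx hfix => ?_⟩
  · exact hα.1.trans_le (le_one_sub_mul_degPoly hrho hrho1 hα')
  · exact hfix ▸ mul_degPoly_le_peelDEirr hlam hrho hrho1 hε.1.le hα' hx

/-- For the irregular peeling-decoder DE map with missing connections and
`ε ∈ (0,1/2)`, `α ∈ (0,1)`, the quantity `δ₀ = ε·λ(1-(1-α)ρ(1-α))` is strictly
positive and lower-bounds every fixed point in `[0,1]`: the asymptotic symbol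
error probability cannot be driven to zero. -/
theorem peelDEirr_fixedPoint_lower_bound
    (Dv Dc : ℕ) (hDv : 2 ≤ Dv) (hDc : 2 ≤ Dc) (lam rho : ℕ → ℝ)
    (hlam : ∀ d, 0 ≤ lam d) (hrho : ∀ d, 0 ≤ rho d)
    (hlam1 : ∑ d ∈ Finset.Icc 2 Dv, lam d = 1)
    (hrho1 : ∑ d ∈ Finset.Icc 2 Dc, rho d = 1)
    (ε α : ℝ) (hε : ε ∈ Set.Ioo (0 : ℝ) (1 / 2)) (hα : α ∈ Set.Ioo (0 : ℝ) 1) :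
    0 < ε * degPoly Dv lam (1 - (1 - α) * degPoly Dc rho (1 - α)) ∧
    ∀ x ∈ Set.Icc (0 : ℝ) 1, x = peelDEirr Dv Dc lam rho x ε α →
      ε * degPoly Dv lam (1 - (1 - α) * degPoly Dc rho (1 - α)) ≤ x :=
  peelDEirr_fixedPoint_lower_bound_general Dv Dc lam rho hlam hrho hlam1 hrho1 ε α hε hα
end

section
/- Let ε ∈ [0,1] and 0 ≤ α₁ ≤ α₂ ≤ 1. Define the two density evolution sequences x_0^{(i)} = ε and x_{ℓ+1}^{(i)} = f(x_ℓ^{(i)}, ε, α_i) for i = 1, 2. Then x_ℓ^{(1)} ≤ x_ℓ^{(2)} for all ℓ ≥ 0, and the limits L(α₁) and L(α₂) of the two sequences (which exist) satisfy L(α₁) ≤ L(α₂): under density evolution, the asymptotic symbol error probability of the peeling decoder increases monotonically with the missing-connection probability α for a given channel erasure probability ε. -/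
lemma peelDE_eq (dv dc : ℕ) (hdc : 1 ≤ dc) (x ε α : ℝ) :
    peelDE dv dc x ε α = ε * (1 - (1 - x) ^ (dc - 1) * (1 - α) ^ dc) ^ (dv - 1) := by
  obtain ⟨k, rfl⟩ : ∃ k, dc = k + 1 := ⟨dc - 1, by omega⟩
  unfold peelDE
  congr 2
  simp only [Nat.add_sub_cancel, mul_pow, pow_succ]
  ring

lemma gval_mem (k l : ℕ) {x α : ℝ} (hx0 : 0 ≤ x) (hx1 : x ≤ 1)
    (ha0 : 0 ≤ α) (ha1 : α ≤ 1) :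
    (1 - x) ^ k * (1 - α) ^ l ∈ Set.Icc (0:ℝ) 1 := by
  have h1 : (0:ℝ) ≤ (1-x)^k := pow_nonneg (by linarith) _
  have h2 : (0:ℝ) ≤ (1-α)^l := pow_nonneg (by linarith) _
  exact ⟨mul_nonneg h1 h2,
    mul_le_one₀ (pow_le_one₀ (by linarith) (by linarith)) h2
      (pow_le_one₀ (by linarith) (by linarith))⟩

lemma gval_mono (k l : ℕ) {x₁ x₂ α₁ α₂ : ℝ} (hx₁0 : 0 ≤ x₁) (hx : x₁ ≤ x₂) (hx₂1 : x₂ ≤ 1)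
    (ha₁0 : 0 ≤ α₁) (ha : α₁ ≤ α₂) (ha₂1 : α₂ ≤ 1) :
    (1 - x₂) ^ k * (1 - α₂) ^ l ≤ (1 - x₁) ^ k * (1 - α₁) ^ l := by
  exact mul_le_mul (pow_le_pow_left₀ (by linarith) (by linarith) k)
    (pow_le_pow_left₀ (by linarith) (by linarith) l)
    (pow_nonneg (by linarith) _) (pow_nonneg (by linarith) _)

lemma peelDE_mono_s13 (dv dc : ℕ) (hdc : 1 ≤ dc) {ε x₁ x₂ α₁ α₂ : ℝ}
    (hε : 0 ≤ ε) (hx₁0 : 0 ≤ x₁) (hx : x₁ ≤ x₂) (hx₂1 : x₂ ≤ 1)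
    (ha₁0 : 0 ≤ α₁) (ha : α₁ ≤ α₂) (ha₂1 : α₂ ≤ 1) :
    peelDE dv dc x₁ ε α₁ ≤ peelDE dv dc x₂ ε α₂ := by
  rw [peelDE_eq dv dc hdc, peelDE_eq dv dc hdc]
  apply mul_le_mul_of_nonneg_left _ hε
  apply pow_le_pow_left₀
  · have := (gval_mem (dc-1) dc hx₁0 (le_trans hx hx₂1) ha₁0 (le_trans ha ha₂1)).2
    linarith
  · have := gval_mono (dc-1) dc hx₁0 hx hx₂1 ha₁0 ha ha₂1
    linarith

lemma peelDE_mem (dv dc : ℕ) (hdc : 1 ≤ dc) {ε x α : ℝ}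
    (hε : 0 ≤ ε) (hx0 : 0 ≤ x) (hx1 : x ≤ 1) (ha0 : 0 ≤ α) (ha1 : α ≤ 1) :
    peelDE dv dc x ε α ∈ Set.Icc (0:ℝ) ε := by
  rw [peelDE_eq dv dc hdc]
  have h := gval_mem (dc-1) dc hx0 hx1 ha0 ha1
  constructor
  · have : (0:ℝ) ≤ (1 - (1 - x) ^ (dc - 1) * (1 - α) ^ dc) ^ (dv - 1) :=
      pow_nonneg (by linarith [h.2]) _
    positivity
  · nth_rewrite 2 [show ε = ε * 1 by ring]
    apply mul_le_mul_of_nonneg_left _ hε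
    exact pow_le_one₀ (by linarith [h.2]) (by linarith [h.1])

/-- Coupling monotonicity in the missing-connection probability: for
`ε ∈ [0,1]` and `0 ≤ α₁ ≤ α₂ ≤ 1`, the DE sequences of the peeling decoder
with missing-connection probabilities `α₁` and `α₂` are pointwise ordered,
and their limits (which exist) satisfy `L(α₁) ≤ L(α₂)`. -/
theorem peelDE_monotone_in_alpha (dv dc : ℕ) (hdv : 2 ≤ dv) (hdc : 2 ≤ dc)
    (ε α₁ α₂ : ℝ) (hε : ε ∈ Set.Icc (0 : ℝ) 1)
    (h0 : 0 ≤ α₁) (h12 : α₁ ≤ α₂) (h21 : α₂ ≤ 1)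
    (xs₁ xs₂ : ℕ → ℝ) (hxs₁0 : xs₁ 0 = ε) (hxs₂0 : xs₂ 0 = ε)
    (hxs₁ : ∀ ℓ : ℕ, xs₁ (ℓ + 1) = peelDE dv dc (xs₁ ℓ) ε α₁)
    (hxs₂ : ∀ ℓ : ℕ, xs₂ (ℓ + 1) = peelDE dv dc (xs₂ ℓ) ε α₂) :
    (∀ ℓ : ℕ, xs₁ ℓ ≤ xs₂ ℓ) ∧
    ∃ L₁ L₂ : ℝ, Filter.Tendsto xs₁ Filter.atTop (nhds L₁) ∧
      Filter.Tendsto xs₂ Filter.atTop (nhds L₂) ∧ L₁ ≤ L₂ := by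
  obtain ⟨hε0, hε1⟩ := hε
  have hdc1 : 1 ≤ dc := by omega
  -- both sequences stay in [0,1]
  have hmem₁ : ∀ ℓ, xs₁ ℓ ∈ Set.Icc (0:ℝ) 1 := by
    intro ℓ; induction ℓ with
    | zero => rw [hxs₁0]; exact ⟨hε0, hε1⟩
    | succ n ih =>
      rw [hxs₁ n]
      have h := peelDE_mem dv dc hdc1 hε0 ih.1 ih.2 h0 (le_trans h12 h21)
      exact ⟨h.1, le_trans h.2 hε1⟩
  have hmem₂ : ∀ ℓ, xs₂ ℓ ∈ Set.Icc (0:ℝ) 1 := by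
    intro ℓ; induction ℓ with
    | zero => rw [hxs₂0]; exact ⟨hε0, hε1⟩
    | succ n ih =>
      rw [hxs₂ n]
      have h := peelDE_mem dv dc hdc1 hε0 ih.1 ih.2 (le_trans h0 h12) h21
      exact ⟨h.1, le_trans h.2 hε1⟩
  -- pointwise comparison
  have hle : ∀ ℓ, xs₁ ℓ ≤ xs₂ ℓ := by
    intro ℓ; induction ℓ with
    | zero => rw [hxs₁0, hxs₂0]
    | succ n ih =>
      rw [hxs₁ n, hxs₂ n]
      exact peelDE_mono_s13 dv dc hdc1 hε0 (hmem₁ n).1 ih (hmem₂ n).2 h0 h12 h21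
  -- each sequence is antitone
  have hanti₁ : Antitone xs₁ := by
    apply antitone_nat_of_succ_le
    intro n
    induction n with
    | zero =>
      rw [hxs₁ 0, hxs₁0]
      exact (peelDE_mem dv dc hdc1 hε0 hε0 hε1 h0 (le_trans h12 h21)).2
    | succ m ih =>
      calc xs₁ (m+2) = peelDE dv dc (xs₁ (m+1)) ε α₁ := hxs₁ (m+1)
        _ ≤ peelDE dv dc (xs₁ m) ε α₁ :=
            peelDE_mono_s13 dv dc hdc1 hε0 (hmem₁ (m+1)).1 ih (hmem₁ m).2 h0 le_rfl
              (le_trans h12 h21)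
        _ = xs₁ (m+1) := (hxs₁ m).symm
  have hanti₂ : Antitone xs₂ := by
    apply antitone_nat_of_succ_le
    intro n
    induction n with
    | zero =>
      rw [hxs₂ 0, hxs₂0]
      exact (peelDE_mem dv dc hdc1 hε0 hε0 hε1 (le_trans h0 h12) h21).2
    | succ m ih =>
      calc xs₂ (m+2) = peelDE dv dc (xs₂ (m+1)) ε α₂ := hxs₂ (m+1)
        _ ≤ peelDE dv dc (xs₂ m) ε α₂ :=
            peelDE_mono_s13 dv dc hdc1 hε0 (hmem₂ (m+1)).1 ih (hmem₂ m).2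
              (le_trans h0 h12) le_rfl h21
        _ = xs₂ (m+1) := (hxs₂ m).symm
  have hbdd₁ : BddBelow (Set.range xs₁) := ⟨0, by rintro _ ⟨n, rfl⟩; exact (hmem₁ n).1⟩
  have hbdd₂ : BddBelow (Set.range xs₂) := ⟨0, by rintro _ ⟨n, rfl⟩; exact (hmem₂ n).1⟩
  have ht₁ := tendsto_atTop_ciInf hanti₁ hbdd₁
  have ht₂ := tendsto_atTop_ciInf hanti₂ hbdd₂
  exact ⟨hle, _, _, ht₁, ht₂, le_of_tendsto_of_tendsto' ht₁ ht₂ hle⟩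
end

section
/- Let ε ∈ (0, 1/2) and α ∈ (0, 1). Then f_GA(0, ε, α) ≥ ε·α^(dv-1) > 0; in particular x = 0 is not a fixed point of x ↦ f_GA(x, ε, α), so the asymptotic decoding error probability of the Gallager A decoder with missing connections cannot be driven to zero. -/
/-- Probability that a check-to-variable message is "?". -/
noncomputable def p0 (dc : ℕ) (α : ℝ) : ℝ := 1 - (1 - α) ^ (dc - 1)

/-- Probability that a check-to-variable message is `+1`. -/
noncomputable def pPlus (dc : ℕ) (α x : ℝ) : ℝ :=
  (1 - α) ^ (dc - 1) * (1 + (1 - 2 * x) ^ (dc - 1)) / 2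

/-- Probability that a check-to-variable message is `-1`. -/
noncomputable def pMinus (dc : ℕ) (α x : ℝ) : ℝ :=
  (1 - α) ^ (dc - 1) * (1 - (1 - 2 * x) ^ (dc - 1)) / 2

/-- Density evolution map of the Gallager A decoder with missing connections
for the (dv,dc)-regular LDPC ensemble over the BSC. -/
noncomputable def gallagerA_DE (dv dc : ℕ) (x ε α : ℝ) : ℝ :=
  ε * α ^ (dv - 1) +
    ∑ v ∈ Finset.Icc 1 (dv - 1),
      (Nat.choose (dv - 1) v : ℝ) * (1 - α) ^ v * α ^ (dv - 1 - v) *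
        ((1 - ε) * ((pMinus dc α x + p0 dc α) ^ v - p0 dc α ^ v -
            pMinus dc α x * p0 dc α ^ (v - 1)) +
         ε * (1 - (pPlus dc α x + p0 dc α) ^ v + p0 dc α ^ v +
            pPlus dc α x * p0 dc α ^ (v - 1)))

/-! At `x = 0` no check node sends `-1`, so the `(1 - ε)` part of every summand vanishes and the
`ε` part collapses to `ε · p0 ^ (v - 1) ≥ 0`; hence `f_GA(0, ε, α)` is at least its first term
`ε · α ^ (dv - 1)`, which is positive. -/

lemma pMinus_zero (dc : ℕ) (α : ℝ) : pMinus dc α 0 = 0 := by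
  simp [pMinus]

lemma pPlus_zero_add_p0 (dc : ℕ) (α : ℝ) : pPlus dc α 0 + p0 dc α = 1 := by
  simp only [pPlus, p0, mul_zero, sub_zero, one_pow]
  ring

lemma p0_nonneg (dc : ℕ) {α : ℝ} (hα₀ : 0 ≤ α) (hα₁ : α ≤ 1) : 0 ≤ p0 dc α :=
  sub_nonneg.mpr (pow_le_one₀ (by linarith) (by linarith))

lemma gallagerA_DE_zero_eq (dv dc : ℕ) (ε α : ℝ) :
    gallagerA_DE dv dc 0 ε α = ε * α ^ (dv - 1) +
      ∑ v ∈ Finset.Icc 1 (dv - 1),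
        (Nat.choose (dv - 1) v : ℝ) * (1 - α) ^ v * α ^ (dv - 1 - v) * (ε * p0 dc α ^ (v - 1)) := by
  rw [gallagerA_DE]
  congr 1
  refine Finset.sum_congr rfl fun v hv => ?_
  obtain ⟨k, rfl⟩ : ∃ k, v = k + 1 := Nat.exists_eq_add_one.mpr (Finset.mem_Icc.mp hv).1
  have hpPlus : pPlus dc α 0 = 1 - p0 dc α := eq_sub_of_add_eq (pPlus_zero_add_p0 dc α)
  rw [pMinus_zero, pPlus_zero_add_p0, hpPlus, Nat.add_sub_cancel]
  ring

lemma le_gallagerA_DE_zero (dv dc : ℕ) {ε α : ℝ} (hε : 0 ≤ ε) (hα₀ : 0 ≤ α) (hα₁ : α ≤ 1) :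
    ε * α ^ (dv - 1) ≤ gallagerA_DE dv dc 0 ε α := by
  rw [gallagerA_DE_zero_eq]
  have hp0 := p0_nonneg dc hα₀ hα₁
  have h1α : 0 ≤ 1 - α := by linarith
  exact le_add_of_nonneg_right (Finset.sum_nonneg fun v _ => by positivity)

theorem gallagerA_DE_zero_not_fixedPoint_general (dv dc : ℕ)
    (ε α : ℝ) (hε : ε ∈ Set.Ioo (0 : ℝ) (1 / 2)) (hα : α ∈ Set.Ioo (0 : ℝ) 1) :
    ε * α ^ (dv - 1) ≤ gallagerA_DE dv dc 0 ε α ∧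
    0 < ε * α ^ (dv - 1) ∧
    (0 : ℝ) ≠ gallagerA_DE dv dc 0 ε α := by
  have hle := le_gallagerA_DE_zero dv dc hε.1.le hα.1.le hα.2.le
  have hpos : 0 < ε * α ^ (dv - 1) := mul_pos hε.1 (pow_pos hα.1 _)
  exact ⟨hle, hpos, (hpos.trans_le hle).ne⟩

/-- For `ε ∈ (0,1/2)` and `α ∈ (0,1)`, the Gallager A DE map with missing
connections satisfies `f_GA(0,ε,α) ≥ ε·α^(dv-1) > 0`; in particular `0` is not
a fixed point, so the asymptotic error probability cannot be driven to zero. -/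
theorem gallagerA_DE_zero_not_fixedPoint (dv dc : ℕ) (hdv : 2 ≤ dv) (hdc : 2 ≤ dc)
    (ε α : ℝ) (hε : ε ∈ Set.Ioo (0 : ℝ) (1 / 2)) (hα : α ∈ Set.Ioo (0 : ℝ) 1) :
    ε * α ^ (dv - 1) ≤ gallagerA_DE dv dc 0 ε α ∧
    0 < ε * α ^ (dv - 1) ∧
    (0 : ℝ) ≠ gallagerA_DE dv dc 0 ε α :=
  gallagerA_DE_zero_not_fixedPoint_general dv dc ε α hε hα
end

section
/- Let ε ∈ [0,1] and α ∈ [0,1], and define the density evolution sequence by x_0 = ε and x_{ℓ+1} = f(x_ℓ, ε, α). Then the sequence (x_ℓ) is monotone nonincreasing, it converges to a limit L ∈ [0, ε], L is a fixed point of x ↦ f(x, ε, α), and every fixed point y ∈ [0, ε] satisfies y ≤ L. -/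
open Set Filter Topology

/-! Iterating a continuous monotone self-map of `[a, b]` from the top endpoint `b` gives a
nonincreasing sequence; its limit is a fixed point, and it dominates every `y` with `y ≤ f y`,
since by monotonicity such a `y` stays below every iterate. The density evolution map is such a
self-map of `[0, ε]`: as a function of `x` it is a composition of polynomials with nonnegative
coefficients, which preserve `[0, 1]` and are monotone there, and the decreasing maps
`x ↦ 1 - x` (applied twice). -/

section FixedPointIteration

variable {f : ℝ → ℝ} {a b : ℝ} {xs : ℕ → ℝ}

lemma iterate_from_top_mem_Icc (hab : a ≤ b) (hmaps : MapsTo f (Icc a b) (Icc a b))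
    (hxs0 : xs 0 = b) (hxs : ∀ n, xs (n + 1) = f (xs n)) (n : ℕ) : xs n ∈ Icc a b := by
  induction n with
  | zero => rw [hxs0]; exact right_mem_Icc.2 hab
  | succ n ih => exact hxs n ▸ hmaps ih

lemma iterate_from_top_antitone (hab : a ≤ b) (hmaps : MapsTo f (Icc a b) (Icc a b))
    (hmono : MonotoneOn f (Icc a b)) (hxs0 : xs 0 = b) (hxs : ∀ n, xs (n + 1) = f (xs n)) :
    Antitone xs := by
  have hmem := iterate_from_top_mem_Icc hab hmaps hxs0 hxs
  refine antitone_nat_of_succ_le fun n => ?_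
  induction n with
  | zero => rw [hxs 0, hxs0]; exact (hmaps (right_mem_Icc.2 hab)).2
  | succ n ih =>
    exact (hxs (n + 1)).trans_le ((hmono (hmem (n + 1)) (hmem n) ih).trans_eq (hxs n).symm)

lemma le_iterate_from_top_of_le_apply (hmaps : MapsTo f (Icc a b) (Icc a b))
    (hmono : MonotoneOn f (Icc a b)) (hxs0 : xs 0 = b) (hxs : ∀ n, xs (n + 1) = f (xs n))
    {y : ℝ} (hy : y ∈ Icc a b) (hyf : y ≤ f y) (n : ℕ) : y ≤ xs n := by
  have hmem := iterate_from_top_mem_Icc (hy.1.trans hy.2) hmaps hxs0 hxs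
  induction n with
  | zero => exact hxs0 ▸ hy.2
  | succ n ih => exact hyf.trans <| hxs n ▸ hmono hy (hmem n) ih

theorem iterate_from_top_tendsto_greatest_fixedPoint (hab : a ≤ b)
    (hmaps : MapsTo f (Icc a b) (Icc a b)) (hmono : MonotoneOn f (Icc a b))
    (hcont : ContinuousOn f (Icc a b)) (hxs0 : xs 0 = b) (hxs : ∀ n, xs (n + 1) = f (xs n)) :
    Antitone xs ∧ ∃ L ∈ Icc a b, Tendsto xs atTop (𝓝 L) ∧ L = f L ∧
      ∀ y ∈ Icc a b, y ≤ f y → y ≤ L := by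
  have hmem := iterate_from_top_mem_Icc hab hmaps hxs0 hxs
  have hanti := iterate_from_top_antitone hab hmaps hmono hxs0 hxs
  have hlim : Tendsto xs atTop (𝓝 (⨅ n, xs n)) :=
    tendsto_atTop_ciInf hanti ⟨a, forall_mem_range.2 fun n => (hmem n).1⟩
  set L := ⨅ n, xs n
  have hL : L ∈ Icc a b := isClosed_Icc.mem_of_tendsto hlim (Eventually.of_forall hmem)
  have hfix : L = f L := by
    have hshift : Tendsto (fun n => f (xs n)) atTop (𝓝 L) := by
      simpa only [← hxs] using (tendsto_add_atTop_iff_nat 1).2 hlim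
    refine tendsto_nhds_unique hshift ((hcont L hL).tendsto.comp ?_)
    exact tendsto_nhdsWithin_iff.2 ⟨hlim, Eventually.of_forall hmem⟩
  exact ⟨hanti, L, hL, hlim, hfix, fun y hy hyf =>
    ge_of_tendsto' hlim (le_iterate_from_top_of_le_apply hmaps hmono hxs0 hxs hy hyf)⟩

end FixedPointIteration

section DegreePolynomial

variable {D : ℕ} {c : ℕ → ℝ}

lemma degPoly_nonneg (hc : ∀ d, 0 ≤ c d) {y : ℝ} (hy : 0 ≤ y) : 0 ≤ degPoly D c y :=
  Finset.sum_nonneg fun d _ => mul_nonneg (hc d) (pow_nonneg hy _)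

lemma degPoly_le_degPoly (hc : ∀ d, 0 ≤ c d) {y z : ℝ} (hy : 0 ≤ y) (hyz : y ≤ z) :
    degPoly D c y ≤ degPoly D c z :=
  Finset.sum_le_sum fun d _ => mul_le_mul_of_nonneg_left (pow_le_pow_left₀ hy hyz _) (hc d)

lemma degPoly_mem_Icc (hc : ∀ d, 0 ≤ c d) (hc1 : ∑ d ∈ Finset.Icc 2 D, c d = 1) {y : ℝ}
    (hy : y ∈ Icc (0 : ℝ) 1) : degPoly D c y ∈ Icc (0 : ℝ) 1 := by
  refine ⟨degPoly_nonneg hc hy.1, ?_⟩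
  calc degPoly D c y ≤ degPoly D c 1 := degPoly_le_degPoly hc hy.1 hy.2
    _ = 1 := by simp only [degPoly, one_pow, mul_one, hc1]

@[fun_prop]
lemma continuous_degPoly : Continuous (degPoly D c) :=
  continuous_finsetSum _ fun _ _ => continuous_const.mul (continuous_pow _)

end DegreePolynomial

section DensityEvolution

variable {Dv Dc : ℕ} {lam rho : ℕ → ℝ} {ε α : ℝ}

lemma peelDEirr_mem_Icc (hlam : ∀ d, 0 ≤ lam d) (hrho : ∀ d, 0 ≤ rho d)
    (hlam1 : ∑ d ∈ Finset.Icc 2 Dv, lam d = 1) (hrho1 : ∑ d ∈ Finset.Icc 2 Dc, rho d = 1)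
    (hε : 0 ≤ ε) (hα : α ∈ Icc (0 : ℝ) 1) {x : ℝ} (hx : x ∈ Icc (0 : ℝ) 1) :
    peelDEirr Dv Dc lam rho x ε α ∈ Icc 0 ε := by
  have hv : (1 - x) * (1 - α) ∈ Icc (0 : ℝ) 1 :=
    unitInterval.mul_mem (Icc.mem_iff_one_sub_mem.1 hx) (Icc.mem_iff_one_sub_mem.1 hα)
  have harg : α + (1 - α) * (1 - degPoly Dc rho ((1 - x) * (1 - α))) ∈ Icc (0 : ℝ) 1 := by
    have := Icc.mem_iff_one_sub_mem.1 <|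
      unitInterval.mul_mem (Icc.mem_iff_one_sub_mem.1 hα) (degPoly_mem_Icc hrho hrho1 hv)
    convert this using 1
    ring
  obtain ⟨hval0, hval1⟩ := degPoly_mem_Icc hlam hlam1 harg
  exact ⟨mul_nonneg hε hval0, mul_le_of_le_one_right hε hval1⟩

lemma peelDEirr_monotoneOn (hlam : ∀ d, 0 ≤ lam d) (hrho : ∀ d, 0 ≤ rho d)
    (hrho1 : ∑ d ∈ Finset.Icc 2 Dc, rho d = 1) (hε : 0 ≤ ε) (hα : α ∈ Icc (0 : ℝ) 1) :
    MonotoneOn (fun x => peelDEirr Dv Dc lam rho x ε α) (Icc (0 : ℝ) 1) := by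
  intro x hx y hy hxy
  have h1α : 0 ≤ 1 - α := sub_nonneg.2 hα.2
  have hvy : 0 ≤ (1 - y) * (1 - α) := mul_nonneg (sub_nonneg.2 hy.2) h1α
  have hvx : (1 - x) * (1 - α) ∈ Icc (0 : ℝ) 1 :=
    unitInterval.mul_mem (Icc.mem_iff_one_sub_mem.1 hx) (Icc.mem_iff_one_sub_mem.1 hα)
  have hρ : degPoly Dc rho ((1 - y) * (1 - α)) ≤ degPoly Dc rho ((1 - x) * (1 - α)) :=
    degPoly_le_degPoly hrho hvy (by gcongr)
  have hρ1 := (degPoly_mem_Icc hrho hrho1 hvx).2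
  have harg : 0 ≤ α + (1 - α) * (1 - degPoly Dc rho ((1 - x) * (1 - α))) :=
    add_nonneg hα.1 (mul_nonneg h1α (sub_nonneg.2 hρ1))
  exact mul_le_mul_of_nonneg_left (degPoly_le_degPoly hlam harg (by gcongr)) hε

lemma continuous_peelDEirr : Continuous fun x => peelDEirr Dv Dc lam rho x ε α := by
  unfold peelDEirr
  fun_prop

end DensityEvolution

theorem peelDEirr_sequence_converges_to_largest_fixedPoint_general
    (Dv Dc : ℕ) (lam rho : ℕ → ℝ)
    (hlam : ∀ d, 0 ≤ lam d) (hrho : ∀ d, 0 ≤ rho d)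
    (hlam1 : ∑ d ∈ Finset.Icc 2 Dv, lam d = 1)
    (hrho1 : ∑ d ∈ Finset.Icc 2 Dc, rho d = 1)
    (ε α : ℝ) (hε : ε ∈ Set.Icc (0 : ℝ) 1) (hα : α ∈ Set.Icc (0 : ℝ) 1)
    (xs : ℕ → ℝ) (hxs0 : xs 0 = ε)
    (hxs : ∀ ℓ : ℕ, xs (ℓ + 1) = peelDEirr Dv Dc lam rho (xs ℓ) ε α) :
    Antitone xs ∧
    ∃ L : ℝ, L ∈ Set.Icc (0 : ℝ) ε ∧
      Filter.Tendsto xs Filter.atTop (nhds L) ∧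
      L = peelDEirr Dv Dc lam rho L ε α ∧
      ∀ y ∈ Set.Icc (0 : ℝ) ε, y = peelDEirr Dv Dc lam rho y ε α → y ≤ L := by
  have hsub : Icc 0 ε ⊆ Icc (0 : ℝ) 1 := Icc_subset_Icc_right hε.2
  obtain ⟨hanti, L, hL, hlim, hfix, hgreatest⟩ := iterate_from_top_tendsto_greatest_fixedPoint
    hε.1 (fun x hx => peelDEirr_mem_Icc hlam hrho hlam1 hrho1 hε.1 hα (hsub hx))
    ((peelDEirr_monotoneOn hlam hrho hrho1 hε.1 hα).mono hsub)
    continuous_peelDEirr.continuousOn hxs0 hxs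
  exact ⟨hanti, L, hL, hlim, hfix, fun y hy hyf => hgreatest y hy hyf.le⟩

/-- For `ε, α ∈ [0,1]`, the density evolution sequence `x₀ = ε`,
`x_{ℓ+1} = f(x_ℓ,ε,α)` of the irregular peeling decoder with missing
connections is monotone nonincreasing and converges to a fixed point
`L ∈ [0,ε]` of `x ↦ f(x,ε,α)` which dominates every fixed point in `[0,ε]`. -/
theorem peelDEirr_sequence_converges_to_largest_fixedPoint
    (Dv Dc : ℕ) (hDv : 2 ≤ Dv) (hDc : 2 ≤ Dc) (lam rho : ℕ → ℝ)
    (hlam : ∀ d, 0 ≤ lam d) (hrho : ∀ d, 0 ≤ rho d)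
    (hlam1 : ∑ d ∈ Finset.Icc 2 Dv, lam d = 1)
    (hrho1 : ∑ d ∈ Finset.Icc 2 Dc, rho d = 1)
    (ε α : ℝ) (hε : ε ∈ Set.Icc (0 : ℝ) 1) (hα : α ∈ Set.Icc (0 : ℝ) 1)
    (xs : ℕ → ℝ) (hxs0 : xs 0 = ε)
    (hxs : ∀ ℓ : ℕ, xs (ℓ + 1) = peelDEirr Dv Dc lam rho (xs ℓ) ε α) :
    Antitone xs ∧
    ∃ L : ℝ, L ∈ Set.Icc (0 : ℝ) ε ∧
      Filter.Tendsto xs Filter.atTop (nhds L) ∧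
      L = peelDEirr Dv Dc lam rho L ε α ∧
      ∀ y ∈ Set.Icc (0 : ℝ) ε, y = peelDEirr Dv Dc lam rho y ε α → y ≤ L :=
  peelDEirr_sequence_converges_to_largest_fixedPoint_general Dv Dc lam rho hlam hrho hlam1 hrho1 ε α
    hε hα xs hxs0 hxs
end
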